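/- Let δ > 0, 0 < R₁ < R₂, L > 0, γ̄ > 0. Let X be exponentially distributed with mean L, and let Y have density f_Y(y) = (2/δ) y^(2/δ−1)/(R₂²−R₁²) on [R₁^δ, R₂^δ], independent of X. Then the random variable Γ = γ̄ X / Y has density f_Γ(γ) = (2/(δ L γ̄ (R₂²−R₁²))) · (L γ̄/γ)^(1+2/δ) · [ γinc(1+2/δ, R₂^δ γ/(L γ̄)) − γinc(1+2/δ, R₁^δ γ/(L γ̄)) ] for γ > 0, where γinc(a,x) = ∫₀ˣ t^(a−1) e^(−t) dt is the lower incomplete gamma function. -/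

import Mathlib

open MeasureTheory ProbabilityTheory Real Set Filter

/-- Exponential distribution with mean `m` (density `m⁻¹ e^{-x/m}` on `x ≥ 0`). -/
noncomputable def expMean (m : ℝ) : Measure ℝ :=
  volume.withDensity fun x => ENNReal.ofReal (if 0 ≤ x then m⁻¹ * Real.exp (-x / m) else 0)

/-- Path-loss distribution: density `(2/δ) y^{2/δ-1}/(R₂²-R₁²)` on `[R₁^δ, R₂^δ]`. -/
noncomputable def pathLossMeasure (δ R₁ R₂ : ℝ) : Measure ℝ :=
  volume.withDensity fun y => ENNReal.ofReal
    (if y ∈ Set.Icc (R₁ ^ δ) (R₂ ^ δ) then 2 / δ * y ^ (2 / δ - 1) / (R₂ ^ 2 - R₁ ^ 2) else 0)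

/-- Lower incomplete gamma function `γinc(a,x) = ∫₀ˣ t^{a-1} e^{-t} dt`. -/
noncomputable def lowerGamma (a x : ℝ) : ℝ := ∫ t in (0:ℝ)..x, t ^ (a - 1) * Real.exp (-t)

/-! Given `Y = y`, the event `a ≤ γ̄X/Y ≤ b` is `X ∈ [ay/γ̄, by/γ̄]`, of probability
`e^{-ay/(Lγ̄)} - e^{-by/(Lγ̄)}`; integrating against the density of `Y` expresses the probability
as one integral over `y ∈ [R₁^δ, R₂^δ]`. On the other side, the substitution `t = γy/(Lγ̄)` turns
the difference of incomplete gamma functions into `∫ y^{2/δ} e^{-γy/(Lγ̄)} dy` over the same range,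
and exchanging the `γ`- and `y`-integrations (Fubini for a continuous integrand on a rectangle)
gives the same integral. -/

open intervalIntegral

lemma integral_mul_exp_neg_mul (r u v : ℝ) :
    ∫ x in u..v, r * exp (-(r * x)) = exp (-(r * u)) - exp (-(r * v)) := by
  rw [integral_eq_sub_of_hasDerivAt (fun x _ => hasDerivAt_neg_exp_mul_exp)
    ((by fun_prop : Continuous fun x => r * exp (-(r * x))).intervalIntegrable u v)]
  ring

lemma integral_exp_neg_mul {r : ℝ} (hr : r ≠ 0) (u v : ℝ) :
    ∫ x in u..v, exp (-(r * x)) = r⁻¹ * (exp (-(r * u)) - exp (-(r * v))) := by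
  rw [← integral_mul_exp_neg_mul, intervalIntegral.integral_const_mul, inv_mul_cancel_left₀ hr]

lemma setLIntegral_Icc_ofReal_eq_ofReal_integral {f : ℝ → ℝ} {A B : ℝ} (hAB : A ≤ B)
    (hf : ContinuousOn f (Icc A B)) (hf₀ : ∀ y ∈ Icc A B, 0 ≤ f y) :
    ∫⁻ y in Icc A B, ENNReal.ofReal (f y) = ENNReal.ofReal (∫ y in A..B, f y) := by
  rw [← ofReal_integral_eq_lintegral_ofReal (hf.integrableOn_compact isCompact_Icc)
      ((ae_restrict_iff' measurableSet_Icc).mpr (ae_of_all _ hf₀)),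
    integral_Icc_eq_integral_Ioc, integral_of_le hAB]

lemma expMean_Icc {L : ℝ} (hL : 0 < L) {u v : ℝ} (hu : 0 ≤ u) (huv : u ≤ v) :
    expMean L (Icc u v) = ENNReal.ofReal (exp (-(L⁻¹ * u)) - exp (-(L⁻¹ * v))) := by
  rw [expMean, withDensity_apply _ measurableSet_Icc,
    setLIntegral_congr_fun measurableSet_Icc
      (g := fun x => ENNReal.ofReal (L⁻¹ * exp (-(L⁻¹ * x))))
      (fun x hx => by rw [if_pos (hu.trans hx.1), neg_div, div_eq_inv_mul]),
    setLIntegral_Icc_ofReal_eq_ofReal_integral huv (by fun_prop) (fun x _ => by positivity),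
    integral_mul_exp_neg_mul]

lemma expMean_div_mem_Icc {L g y a b : ℝ} (hL : 0 < L) (hg : 0 < g) (hy : 0 < y) (ha : 0 ≤ a)
    (hab : a ≤ b) :
    expMean L {x | g * x / y ∈ Icc a b} =
      ENNReal.ofReal (exp (-(y / (L * g) * a)) - exp (-(y / (L * g) * b))) := by
  have hset : {x | g * x / y ∈ Icc a b} = Icc (a * y / g) (b * y / g) := by
    ext x
    simp only [mem_ofPred_eq, mem_Icc, le_div_iff₀ hy, div_le_iff₀ hy, div_le_iff₀ hg,
      le_div_iff₀ hg, mul_comm g]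
  rw [hset, expMean_Icc hL (by positivity) (by gcongr)]
  congr 3 <;> field_simp

instance instSFiniteExpMean (m : ℝ) : SFinite (expMean m) := by
  unfold expMean; infer_instance

instance instSFinitePathLossMeasure (δ R₁ R₂ : ℝ) : SFinite (pathLossMeasure δ R₁ R₂) := by
  unfold pathLossMeasure; infer_instance

lemma lintegral_pathLossMeasure (δ R₁ R₂ : ℝ) {F : ℝ → ENNReal} (hF : Measurable F) :
    ∫⁻ y, F y ∂pathLossMeasure δ R₁ R₂ = ∫⁻ y in Icc (R₁ ^ δ) (R₂ ^ δ),
      ENNReal.ofReal (2 / δ * y ^ (2 / δ - 1) / (R₂ ^ 2 - R₁ ^ 2)) * F y := by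
  have hdensity : Measurable fun y : ℝ => ENNReal.ofReal
      (if y ∈ Icc (R₁ ^ δ) (R₂ ^ δ) then 2 / δ * y ^ (2 / δ - 1) / (R₂ ^ 2 - R₁ ^ 2) else 0) :=
    (Measurable.ite measurableSet_Icc (by fun_prop) measurable_const).ennreal_ofReal
  rw [pathLossMeasure, lintegral_withDensity_eq_lintegral_mul _ hdensity hF,
    ← lintegral_indicator measurableSet_Icc]
  congr 1
  ext y
  rw [Pi.mul_apply]
  by_cases hy : y ∈ Icc (R₁ ^ δ) (R₂ ^ δ)
  · rw [if_pos hy, indicator_of_mem hy]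
  · rw [if_neg hy, indicator_of_notMem hy, ENNReal.ofReal_zero, zero_mul]

lemma measurableSet_mul_div_mem_Icc (g a b : ℝ) :
    MeasurableSet {p : ℝ × ℝ | g * p.1 / p.2 ∈ Icc a b} :=
  (by fun_prop : Measurable fun p : ℝ × ℝ => g * p.1 / p.2) measurableSet_Icc

lemma expMean_prod_pathLossMeasure_div_mem_Icc {δ R₁ R₂ L g a b : ℝ} (hδ : 0 < δ) (hR₁ : 0 < R₁)
    (hR : R₁ < R₂) (hL : 0 < L) (hg : 0 < g) (ha : 0 ≤ a) (hab : a ≤ b) :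
    ((expMean L).prod (pathLossMeasure δ R₁ R₂)) {p | g * p.1 / p.2 ∈ Icc a b} =
      ENNReal.ofReal (∫ y in R₁ ^ δ..R₂ ^ δ, 2 / δ * y ^ (2 / δ - 1) / (R₂ ^ 2 - R₁ ^ 2) *
        (exp (-(y / (L * g) * a)) - exp (-(y / (L * g) * b)))) := by
  have hA : 0 < R₁ ^ δ := rpow_pos_of_pos hR₁ δ
  have hAB : R₁ ^ δ ≤ R₂ ^ δ := rpow_le_rpow hR₁.le hR.le hδ.le
  have hR₂₁ : 0 < R₂ ^ 2 - R₁ ^ 2 := by nlinarith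
  have hcont : ContinuousOn (fun y => 2 / δ * y ^ (2 / δ - 1) / (R₂ ^ 2 - R₁ ^ 2) *
      (exp (-(y / (L * g) * a)) - exp (-(y / (L * g) * b)))) (Icc (R₁ ^ δ) (R₂ ^ δ)) := by
    have hpow : ContinuousOn (fun y : ℝ => y ^ (2 / δ - 1)) (Icc (R₁ ^ δ) (R₂ ^ δ)) :=
      continuousOn_id.rpow_const fun y hy => Or.inl (hA.trans_le hy.1).ne'
    exact ((hpow.const_smul (2 / δ)).div_const _).mul (by fun_prop)
  have hnonneg : ∀ y ∈ Icc (R₁ ^ δ) (R₂ ^ δ), 0 ≤ 2 / δ * y ^ (2 / δ - 1) / (R₂ ^ 2 - R₁ ^ 2) *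
      (exp (-(y / (L * g) * a)) - exp (-(y / (L * g) * b))) := by
    intro y hy
    have hy : 0 < y := hA.trans_le hy.1
    have hexp : exp (-(y / (L * g) * b)) ≤ exp (-(y / (L * g) * a)) := by gcongr
    exact mul_nonneg (div_nonneg (by positivity) hR₂₁.le) (sub_nonneg.2 hexp)
  have hS := measurableSet_mul_div_mem_Icc g a b
  rw [Measure.prod_apply_symm hS,
    lintegral_pathLossMeasure _ _ _ (measurable_measure_prodMk_right hS),
    ← setLIntegral_Icc_ofReal_eq_ofReal_integral hAB hcont hnonneg]
  refine setLIntegral_congr_fun measurableSet_Icc fun y hy => ?_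
  have hy : 0 < y := hA.trans_le hy.1
  rw [ENNReal.ofReal_mul (div_nonneg (by positivity) hR₂₁.le),
    ← expMean_div_mem_Icc hL hg hy ha hab]
  rfl

lemma lowerGamma_sub_lowerGamma {a : ℝ} (ha : 1 ≤ a) (x y : ℝ) :
    lowerGamma a y - lowerGamma a x = ∫ t in x..y, t ^ (a - 1) * exp (-t) := by
  have hcont : Continuous fun t : ℝ => t ^ (a - 1) * exp (-t) :=
    (continuous_rpow_const (sub_nonneg.2 ha)).mul (by fun_prop)
  exact integral_interval_sub_left (hcont.intervalIntegrable 0 y) (hcont.intervalIntegrable 0 x)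

lemma lowerGamma_sub_lowerGamma_mul {p k A B : ℝ} (hp : 0 ≤ p) (hk : 0 < k) (hA : 0 ≤ A)
    (hB : 0 ≤ B) :
    lowerGamma (1 + p) (k * B) - lowerGamma (1 + p) (k * A) =
      k ^ (1 + p) * ∫ y in A..B, y ^ p * exp (-(k * y)) := by
  have hsub := integral_comp_mul_left (fun t => t ^ p * exp (-t)) hk.ne' (a := A) (b := B)
  have hscale : ∫ y in A..B, (k * y) ^ p * exp (-(k * y)) =
      k ^ p * ∫ y in A..B, y ^ p * exp (-(k * y)) := by
    rw [← intervalIntegral.integral_const_mul]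
    refine integral_congr fun y hy => ?_
    rw [mul_rpow hk.le ((le_min hA hB).trans hy.1), mul_assoc]
  rw [hscale, smul_eq_mul] at hsub
  rw [lowerGamma_sub_lowerGamma (by linarith), add_sub_cancel_left, rpow_add hk, rpow_one,
    mul_assoc, hsub, mul_inv_cancel_left₀ hk.ne']

lemma intervalIntegral_intervalIntegral_swap {f : ℝ → ℝ → ℝ}
    (hf : Continuous (Function.uncurry f)) {a b A B : ℝ} (hab : a ≤ b) (hAB : A ≤ B) :
    ∫ x in a..b, ∫ y in A..B, f x y = ∫ y in A..B, ∫ x in a..b, f x y := by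
  simp only [integral_of_le hab, integral_of_le hAB]
  refine integral_integral_swap ?_
  rw [Measure.prod_restrict, ← Measure.volume_eq_prod]
  exact (hf.continuousOn.integrableOn_compact (isCompact_Icc.prod isCompact_Icc)).mono_set
    (prod_mono Ioc_subset_Icc_self Ioc_subset_Icc_self)

lemma integral_const_mul_rpow_mul_lowerGamma_sub {p c A B a b : ℝ} (C : ℝ) (hp : 0 ≤ p)
    (hc : 0 < c) (hA : 0 < A) (hAB : A ≤ B) (ha : 0 < a) (hab : a ≤ b) :
    ∫ γ in a..b, C * (c / γ) ^ (1 + p) *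
        (lowerGamma (1 + p) (B * γ / c) - lowerGamma (1 + p) (A * γ / c)) =
      ∫ y in A..B, C * c * y ^ (p - 1) * (exp (-(y / c * a)) - exp (-(y / c * b))) := by
  have hinner : ∀ γ ∈ uIcc a b, C * (c / γ) ^ (1 + p) *
      (lowerGamma (1 + p) (B * γ / c) - lowerGamma (1 + p) (A * γ / c)) =
        C * ∫ y in A..B, y ^ p * exp (-(γ / c * y)) := by
    intro γ hγ
    rw [uIcc_of_le hab] at hγ
    have hγ : 0 < γ := ha.trans_le hγ.1
    have hcancel : (c / γ) ^ (1 + p) * (γ / c) ^ (1 + p) = 1 := by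
      rw [← mul_rpow (by positivity) (by positivity), div_mul_div_cancel₀ hγ.ne',
        div_self hc.ne', one_rpow]
    rw [show B * γ / c = γ / c * B by ring, show A * γ / c = γ / c * A by ring,
      lowerGamma_sub_lowerGamma_mul hp (div_pos hγ hc) hA.le (hA.le.trans hAB), mul_assoc C,
      ← mul_assoc _ _ (∫ _ in _.._, _), hcancel, one_mul]
  have hcont : Continuous (Function.uncurry fun γ y : ℝ => y ^ p * exp (-(γ / c * y))) :=
    ((continuous_rpow_const hp).comp continuous_snd).mul (by fun_prop)
  rw [integral_congr hinner, intervalIntegral.integral_const_mul,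
    intervalIntegral_intervalIntegral_swap hcont hab hAB, ← intervalIntegral.integral_const_mul]
  refine integral_congr fun y hy => ?_
  rw [uIcc_of_le hAB] at hy
  have hy : 0 < y := hA.trans_le hy.1
  have hcomm : (fun γ => exp (-(γ / c * y))) = fun γ => exp (-(y / c * γ)) := by
    ext γ; ring_nf
  rw [intervalIntegral.integral_const_mul, hcomm, integral_exp_neg_mul (div_pos hy hc).ne',
    rpow_sub_one hy.ne']
  field_simp

/-- density of Γ = γ̄X/Y in the random discrete phase shifting model. -/
theorem statement_1 {Ω : Type*} [MeasureSpace Ω] [IsProbabilityMeasure (ℙ : Measure Ω)]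
    (δ R₁ R₂ L gbar : ℝ) (hδ : 0 < δ) (hR₁ : 0 < R₁) (hR : R₁ < R₂) (hL : 0 < L)
    (hg : 0 < gbar) (X Y : Ω → ℝ) (hX : Measurable X) (hY : Measurable Y)
    (hind : IndepFun X Y ℙ)
    (hXlaw : Measure.map X ℙ = expMean L)
    (hYlaw : Measure.map Y ℙ = pathLossMeasure δ R₁ R₂) :
    ∀ a b : ℝ, 0 < a → a ≤ b →
      ℙ {ω | a ≤ gbar * X ω / Y ω ∧ gbar * X ω / Y ω ≤ b} =
        ENNReal.ofReal (∫ γ in a..b,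
          2 / (δ * L * gbar * (R₂ ^ 2 - R₁ ^ 2)) * (L * gbar / γ) ^ (1 + 2 / δ) *
            (lowerGamma (1 + 2 / δ) (R₂ ^ δ * γ / (L * gbar)) -
              lowerGamma (1 + 2 / δ) (R₁ ^ δ * γ / (L * gbar)))) := by
  intro a b ha hab
  have hjoint : Measure.map (fun ω => (X ω, Y ω)) ℙ =
      (expMean L).prod (pathLossMeasure δ R₁ R₂) := by
    rw [← hXlaw, ← hYlaw]
    exact (indepFun_iff_map_prod_eq_prod_map_map hX.aemeasurable hY.aemeasurable).mp hind
  have hevent : {ω | a ≤ gbar * X ω / Y ω ∧ gbar * X ω / Y ω ≤ b} =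
      (fun ω => (X ω, Y ω)) ⁻¹' {p | gbar * p.1 / p.2 ∈ Icc a b} := rfl
  rw [hevent, ← Measure.map_apply (hX.prodMk hY) (measurableSet_mul_div_mem_Icc gbar a b), hjoint,
    expMean_prod_pathLossMeasure_div_mem_Icc hδ hR₁ hR hL hg ha.le hab,
    integral_const_mul_rpow_mul_lowerGamma_sub _ (by positivity) (mul_pos hL hg)
      (rpow_pos_of_pos hR₁ δ) (rpow_le_rpow hR₁.le hR.le hδ.le) ha hab]
  congr 1
  refine integral_congr fun y _ => ?_
  have hR₂₁ : R₂ ^ 2 - R₁ ^ 2 ≠ 0 := by nlinarith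
  field_simp
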